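/- (Uniqueness among ordered positive solutions.) Let N ≥ 1, 0 ≤ m ≤ 2, ε > 0, let a ∈ C(ℝ^N) ∩ L^∞(ℝ^N), and let J ∈ L¹(ℝ^N) be nonnegative, radially symmetric, with unit mass. Suppose u ∈ L¹(ℝ^N) ∩ L^∞(ℝ^N) and v ∈ L^∞(ℝ^N) both solve (KPP) almost everywhere, u > 0 and v > 0 almost everywhere, and u ≤ v almost everywhere. Then u = v almost everywhere. (Indeed, integrating the equations against each other yields ∫_{ℝ^N} u v (v − u) = 0.) -/

import Mathlib

open MeasureTheory Filter Metric Set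

noncomputable section

abbrev Sp (N : ℕ) := EuclideanSpace ℝ (Fin N)

/-- The rescaled kernel `J_ε(z) = ε^{-N} J(z/ε)`. -/
def Jresc (N : ℕ) (J : Sp N → ℝ) (ε : ℝ) (z : Sp N) : ℝ := (1 / ε ^ N) * J (ε⁻¹ • z)

/-- The convolution `(J_ε ∗ u)(x)`. -/
def convJ (N : ℕ) (J : Sp N → ℝ) (ε : ℝ) (u : Sp N → ℝ) (x : Sp N) : ℝ :=
  ∫ y, Jresc N J ε (x - y) * u y

/-- `u` satisfies the nonlocal KPP equation at the point `x`:
`ε^{-m} (J_ε ∗ u - u)(x) + u(x)(a(x) - u(x)) = 0`. -/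
def kppEq (N : ℕ) (J a : Sp N → ℝ) (m ε : ℝ) (u : Sp N → ℝ) (x : Sp N) : Prop :=
  (1 / ε ^ m) * (convJ N J ε u x - u x) + u x * (a x - u x) = 0

/-- Assumption (1.1): `a` continuous, bounded, `a⁺ ≢ 0`, `limsup_{|x|→∞} a(x) < 0`. -/
def assumpA (N : ℕ) (a : Sp N → ℝ) : Prop :=
  Continuous a ∧ (∃ C, ∀ x, |a x| ≤ C) ∧ (∃ x, 0 < a x) ∧
    (∃ R δ : ℝ, 0 < δ ∧ ∀ x : Sp N, R ≤ ‖x‖ → a x ≤ -δ)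

/-- Assumption (1.4): `J ∈ L¹` nonnegative, radially symmetric, with unit mass and
finite `m`-th order moment. -/
def assumpJ (N : ℕ) (J : Sp N → ℝ) (m : ℝ) : Prop :=
  Integrable J ∧ (∀ x, 0 ≤ J x) ∧ (∀ x y : Sp N, ‖x‖ = ‖y‖ → J x = J y) ∧
    (∫ x, J x) = 1 ∧ Integrable (fun x => J x * ‖x‖ ^ m)

/-!
Multiplying the equation for `u` by `v`, the one for `v` by `u` and subtracting, the reaction
terms `u v a` cancel and `u v (v - u) = ε^{-m} (u · J_ε ∗ v - v · J_ε ∗ u)` a.e. Since `J_ε` is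
even, Fubini and the exchange `x ↔ y` give `∫ u · J_ε ∗ v = ∫ v · J_ε ∗ u` (`u ∈ L¹` and `v ∈ L^∞`
make everything integrable), so the a.e. nonnegative function `u v (v - u)` has integral zero and
vanishes a.e.; as `0 < u ≤ v`, this forces `u = v`.
-/

section SymmetricKernel

variable {G : Type*} [AddGroup G] {k u v : G → ℝ}

theorem mul_even_kernel_mul_comp_swap (hk_even : ∀ z, k (-z) = k z) :
    (fun p : G × G => u p.1 * (k (p.1 - p.2) * v p.2)) ∘ Prod.swap =
      fun p : G × G => v p.1 * (k (p.1 - p.2) * u p.2) := by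
  funext p
  simp only [Function.comp_apply, Prod.fst_swap, Prod.snd_swap, ← neg_sub p.1 p.2, hk_even]
  ring

variable [MeasurableSpace G] [MeasurableAdd₂ G] [MeasurableNeg G]
  {μ : Measure G} [SFinite μ] [μ.IsAddRightInvariant] {C : ℝ}

theorem integrable_prod_mul_kernel_mul (hk : Integrable k μ) (hu : Integrable u μ)
    (hv : AEStronglyMeasurable v μ) (hC : ∀ x, |v x| ≤ C) :
    Integrable (fun p : G × G => v p.1 * (k (p.1 - p.2) * u p.2)) (μ.prod μ) := by
  have hconv : Integrable (fun p : G × G => u p.2 * k (p.1 - p.2)) (μ.prod μ) :=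
    hu.convolution_integrand (ContinuousLinearMap.mul ℝ ℝ) hk
  simp_rw [mul_comm (k _)]
  exact hconv.bdd_mul hv.comp_fst (Eventually.of_forall fun p => hC p.1)

theorem integrable_prod_mul_even_kernel_mul (hk : Integrable k μ) (hk_even : ∀ z, k (-z) = k z)
    (hu : Integrable u μ) (hv : AEStronglyMeasurable v μ) (hC : ∀ x, |v x| ≤ C) :
    Integrable (fun p : G × G => u p.1 * (k (p.1 - p.2) * v p.2)) (μ.prod μ) :=
  integrable_swap_iff.mp <|
    (mul_even_kernel_mul_comp_swap hk_even).symm ▸ integrable_prod_mul_kernel_mul hk hu hv hC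

theorem integrable_mul_integral_kernel_mul (hk : Integrable k μ) (hu : Integrable u μ)
    (hv : AEStronglyMeasurable v μ) (hC : ∀ x, |v x| ≤ C) :
    Integrable (fun x => v x * ∫ y, k (x - y) * u y ∂μ) μ := by
  simpa only [integral_const_mul] using
    (integrable_prod_mul_kernel_mul hk hu hv hC).integral_prod_left

theorem integrable_mul_integral_even_kernel_mul (hk : Integrable k μ)
    (hk_even : ∀ z, k (-z) = k z) (hu : Integrable u μ) (hv : AEStronglyMeasurable v μ)
    (hC : ∀ x, |v x| ≤ C) :
    Integrable (fun x => u x * ∫ y, k (x - y) * v y ∂μ) μ := by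
  simpa only [integral_const_mul] using
    (integrable_prod_mul_even_kernel_mul hk hk_even hu hv hC).integral_prod_left

theorem integral_mul_integral_even_kernel_mul_comm (hk : Integrable k μ)
    (hk_even : ∀ z, k (-z) = k z) (hu : Integrable u μ) (hv : AEStronglyMeasurable v μ)
    (hC : ∀ x, |v x| ≤ C) :
    ∫ x, u x * ∫ y, k (x - y) * v y ∂μ ∂μ = ∫ x, v x * ∫ y, k (x - y) * u y ∂μ ∂μ := by
  simp_rw [← integral_const_mul]
  rw [integral_integral (integrable_prod_mul_even_kernel_mul hk hk_even hu hv hC),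
    integral_integral (integrable_prod_mul_kernel_mul hk hu hv hC), ← integral_prod_swap]
  exact congrArg (∫ p, · p ∂μ.prod μ) (mul_even_kernel_mul_comp_swap hk_even)

end SymmetricKernel

section Kernel

variable {N : ℕ} {J : Sp N → ℝ} {ε : ℝ}

theorem integrable_Jresc (hJ : Integrable J) (hε : ε ≠ 0) : Integrable (Jresc N J ε) :=
  (hJ.comp_smul (inv_ne_zero hε)).const_mul _

theorem Jresc_neg (hJrad : ∀ x y : Sp N, ‖x‖ = ‖y‖ → J x = J y) (z : Sp N) :
    Jresc N J ε (-z) = Jresc N J ε z := by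
  unfold Jresc
  rw [hJrad _ (ε⁻¹ • z) (by rw [smul_neg, norm_neg])]

end Kernel

theorem mul_mul_sub_eq_of_kppEq {N : ℕ} {J a : Sp N → ℝ} {m ε : ℝ} {u v : Sp N → ℝ} {x : Sp N}
    (hu : kppEq N J a m ε u x) (hv : kppEq N J a m ε v x) :
    u x * v x * (v x - u x) =
      1 / ε ^ m * (u x * convJ N J ε v x - v x * convJ N J ε u x) := by
  unfold kppEq at hu hv
  linear_combination v x * hu - u x * hv

theorem statement15_general (N : ℕ) (m : ℝ)
    (ε : ℝ) (hε : 0 < ε) (a J : Sp N → ℝ)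
    (hJint : Integrable J)
    (hJrad : ∀ x y : Sp N, ‖x‖ = ‖y‖ → J x = J y)
    (u v : Sp N → ℝ) (huint : Integrable u)
    (hvmeas : Measurable v) (hvbdd : ∃ C, ∀ x, |v x| ≤ C)
    (husol : ∀ᵐ x : Sp N, kppEq N J a m ε u x)
    (hvsol : ∀ᵐ x : Sp N, kppEq N J a m ε v x)
    (hupos : ∀ᵐ x : Sp N, 0 < u x)
    (huv : ∀ᵐ x : Sp N, u x ≤ v x) :
    u =ᵐ[volume] v := by
  obtain ⟨C, hC⟩ := hvbdd
  have hk := integrable_Jresc hJint hε.ne'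
  have hk_even := Jresc_neg (ε := ε) hJrad
  have hv : AEStronglyMeasurable v := hvmeas.aestronglyMeasurable
  have hcross : (fun x => u x * v x * (v x - u x)) =ᵐ[volume]
      fun x => 1 / ε ^ m * (u x * convJ N J ε v x - v x * convJ N J ε u x) := by
    filter_upwards [husol, hvsol] with x hux hvx using mul_mul_sub_eq_of_kppEq hux hvx
  have hint_uv := integrable_mul_integral_even_kernel_mul hk hk_even huint hv hC
  have hint_vu := integrable_mul_integral_kernel_mul hk huint hv hC
  have hint : Integrable (fun x => u x * v x * (v x - u x)) :=
    ((hint_uv.sub hint_vu).const_mul _).congr hcross.symm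
  have hzero : ∫ x, u x * v x * (v x - u x) = 0 := by
    rw [integral_congr_ae hcross, integral_const_mul]
    unfold convJ
    rw [integral_sub hint_uv hint_vu,
      integral_mul_integral_even_kernel_mul_comm hk hk_even huint hv hC, sub_self, mul_zero]
  have hnonneg : 0 ≤ᵐ[volume] fun x => u x * v x * (v x - u x) := by
    filter_upwards [hupos, huv] with x hu huvx
    have := hu.trans_le huvx
    have := sub_nonneg.2 huvx
    positivity
  filter_upwards [(integral_eq_zero_iff_of_nonneg_ae hnonneg hint).1 hzero, hupos, huv]
    with x hx hu huvx
  have : v x - u x = 0 := by simpa [hu.ne', (hu.trans_le huvx).ne'] using hx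
  linarith

/-- **Uniqueness among ordered positive solutions.** If `u ∈ L¹ ∩ L^∞` and `v ∈ L^∞` both
solve (KPP) a.e., are a.e. positive, and `u ≤ v` a.e., then `u = v` a.e. -/
theorem statement15 (N : ℕ) (hN : 1 ≤ N) (m : ℝ) (hm0 : 0 ≤ m) (hm2 : m ≤ 2)
    (ε : ℝ) (hε : 0 < ε) (a J : Sp N → ℝ) (hacont : Continuous a)
    (habdd : ∃ C, ∀ x, |a x| ≤ C)
    (hJint : Integrable J) (hJpos : ∀ x, 0 ≤ J x)
    (hJrad : ∀ x y : Sp N, ‖x‖ = ‖y‖ → J x = J y) (hJmass : (∫ x, J x) = 1)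
    (u v : Sp N → ℝ) (huint : Integrable u) (humeas : Measurable u)
    (hubdd : ∃ C, ∀ x, |u x| ≤ C) (hvmeas : Measurable v) (hvbdd : ∃ C, ∀ x, |v x| ≤ C)
    (husol : ∀ᵐ x : Sp N, kppEq N J a m ε u x)
    (hvsol : ∀ᵐ x : Sp N, kppEq N J a m ε v x)
    (hupos : ∀ᵐ x : Sp N, 0 < u x) (hvpos : ∀ᵐ x : Sp N, 0 < v x)
    (huv : ∀ᵐ x : Sp N, u x ≤ v x) :
    u =ᵐ[volume] v :=
  statement15_general N m ε hε a J hJint hJrad u v huint hvmeas hvbdd husol hvsol hupos huv
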